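/- Let F be a field with char F ≠ 2, 3, and let A be the 2-dimensional algebra with products e1·e1 = α1·e1, e1·e2 = β2·e2, e2·e1 = (1−α1)·e2, e2·e2 = 0, with α1, β2 ∈ F. If β2 ≠ 2α1 − 1, then the derivations of A are exactly the maps e1 ↦ 0, e2 ↦ d·e2, d ∈ F; if β2 = 2α1 − 1, they are exactly the maps e1 ↦ c·e2, e2 ↦ d·e2, c, d ∈ F. -/
import Mathlib


/-- Bilinear multiplication on `Fin 2 → F` determined by the four products
`e1·e1 = p11`, `e1·e2 = p12`, `e2·e1 = p21`, `e2·e2 = p22` of basis vectors. -/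
def mul2 {F : Type*} [Field F] (p11 p12 p21 p22 : Fin 2 → F) (u v : Fin 2 → F) : Fin 2 → F :=
  (u 0 * v 0) • p11 + (u 0 * v 1) • p12 + (u 1 * v 0) • p21 + (u 1 * v 1) • p22

lemma decomp2 {F : Type*} [Field F] (d : (Fin 2 → F) →ₗ[F] (Fin 2 → F)) (u : Fin 2 → F) :
    d u = u 0 • d ![1, 0] + u 1 • d ![0, 1] := by
  rw [← map_smul, ← map_smul, ← map_add]
  congr 1
  funext i; fin_cases i <;> simp

lemma key13 {F : Type*} [Field F] (α1 β2 : F) (d : (Fin 2 → F) →ₗ[F] (Fin 2 → F)) :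
    (∀ u v, d (mul2 ![α1, 0] ![0, β2] ![0, 1 - α1] ![0, 0] u v) =
      mul2 ![α1, 0] ![0, β2] ![0, 1 - α1] ![0, 0] (d u) v +
      mul2 ![α1, 0] ![0, β2] ![0, 1 - α1] ![0, 0] u (d v)) ↔
    ((d ![1, 0]) 0 = 0 ∧ (d ![0, 1]) 0 = 0 ∧ (d ![1, 0]) 1 * (β2 - (2 * α1 - 1)) = 0) := by
  set A := d ![1, 0] with hA
  set B := d ![0, 1] with hB
  constructor
  · intro h
    have h11 := h ![1, 0] ![1, 0]
    have h12 := h ![1, 0] ![0, 1]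
    have h21 := h ![0, 1] ![1, 0]
    have h22 := h ![0, 1] ![0, 1]
    rw [show (mul2 ![α1, 0] ![0, β2] ![0, 1 - α1] ![0, 0] ![1, 0] ![1, 0] : Fin 2 → F) = α1 • ![1, 0] by funext i; fin_cases i <;> simp [mul2], map_smul] at h11
    rw [show (mul2 ![α1, 0] ![0, β2] ![0, 1 - α1] ![0, 0] ![1, 0] ![0, 1] : Fin 2 → F) = β2 • ![0, 1] by funext i; fin_cases i <;> simp [mul2], map_smul] at h12
    rw [show (mul2 ![α1, 0] ![0, β2] ![0, 1 - α1] ![0, 0] ![0, 1] ![1, 0] : Fin 2 → F) = (1 - α1) • ![0, 1] by funext i; fin_cases i <;> simp [mul2], map_smul] at h21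
    rw [show (mul2 ![α1, 0] ![0, β2] ![0, 1 - α1] ![0, 0] ![0, 1] ![0, 1] : Fin 2 → F) = (0:F) • ![0, 1] by funext i; fin_cases i <;> simp [mul2], map_smul] at h22
    have e11a := congrFun h11 0
    have e11b := congrFun h11 1
    have e12a := congrFun h12 0
    have e21a := congrFun h21 0
    have e21b := congrFun h21 1
    have e22b := congrFun h22 1
    simp [mul2, Matrix.cons_val_zero, Matrix.cons_val_one] at e11a e11b e12a e21a e21b e22b
    refine ⟨?_, ?_, ?_⟩
    · linear_combination -e11a - e21b
    · linear_combination -e22b - e12a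
    · linear_combination -e11b
  · rintro ⟨ha, hc, hb⟩ u v
    rw [decomp2 d (mul2 _ _ _ _ u v), decomp2 d u, decomp2 d v]
    funext i
    fin_cases i <;> rw [← hA, ← hB] <;>
      simp [mul2, ha, hc, Matrix.cons_val_zero, Matrix.cons_val_one]
    linear_combination (-(u 0 * v 0)) * hb

theorem stmt13 {F : Type*} [Field F] (h2 : (2 : F) ≠ 0) (h3 : (3 : F) ≠ 0) (α1 β2 : F)
    (mul : (Fin 2 → F) → (Fin 2 → F) → (Fin 2 → F))
    (hmul : mul = mul2 ![α1, 0] ![0, β2] ![0, 1 - α1] ![0, 0]) :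
    (β2 ≠ 2 * α1 - 1 → ∀ d : (Fin 2 → F) →ₗ[F] (Fin 2 → F), (∀ u v, d (mul u v) = mul (d u) v + mul u (d v)) ↔
      (∃ δ : F, d ![1, 0] = 0 ∧ d ![0, 1] = ![0, δ])) ∧
    (β2 = 2 * α1 - 1 → ∀ d : (Fin 2 → F) →ₗ[F] (Fin 2 → F), (∀ u v, d (mul u v) = mul (d u) v + mul u (d v)) ↔
      (∃ c δ : F, d ![1, 0] = ![0, c] ∧ d ![0, 1] = ![0, δ])) := by
  subst hmul
  constructor
  · intro hne d
    rw [key13]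
    constructor
    · rintro ⟨ha, hc, hb⟩
      have hfac : β2 - (2 * α1 - 1) ≠ 0 := sub_ne_zero_of_ne hne
      have hA1 : (d ![1, 0]) 1 = 0 := by
        rcases mul_eq_zero.mp hb with h | h
        · exact h
        · exact absurd h hfac
      refine ⟨(d ![0, 1]) 1, ?_, ?_⟩
      · funext i; fin_cases i <;> simp [ha, hA1]
      · funext i; fin_cases i <;> simp [hc]
    · rintro ⟨δ, h1, h2⟩
      refine ⟨by rw [h1]; rfl, by rw [h2]; simp, by rw [h1]; simp⟩
  · intro heq d
    rw [key13]
    constructor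
    · rintro ⟨ha, hc, hb⟩
      refine ⟨(d ![1, 0]) 1, (d ![0, 1]) 1, ?_, ?_⟩
      · funext i; fin_cases i <;> simp [ha]
      · funext i; fin_cases i <;> simp [hc]
    · rintro ⟨c, δ, h1, h2⟩
      refine ⟨by rw [h1]; simp, by rw [h2]; simp, by rw [heq]; ring⟩
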